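/- If $\mathcal{A}$ is a maximal ideal independent family of cardinality strictly less than $2^{\aleph_0}$, then there are at most finitely many $A \in \mathcal{A}$ for which the complemented filter $\mathcal{F}(\mathcal{A}, A)$ is not an ultrafilter. -/

import Mathlib

/-- A family of infinite subsets of ω is *ideal independent* if no member is
almost covered by finitely many of the others. -/
def IdealIndependent (A : Set (Set ℕ)) : Prop :=
  (∀ X ∈ A, X.Infinite) ∧
  ∀ X ∈ A, ∀ F : Finset (Set ℕ), ↑F ⊆ A \ {X} → (X \ ⋃ Y ∈ F, Y).Infinite

/-- Maximal ideal independent family: no ideal independent family properly contains it. -/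
def MaximalIdealIndependent (A : Set (Set ℕ)) : Prop :=
  IdealIndependent A ∧ ∀ B : Set (Set ℕ), IdealIndependent B → A ⊆ B → B = A

/-- Generating sets of the complemented filter `𝓕(A, X)`. -/
def genSets (A : Set (Set ℕ)) (X : Set ℕ) : Set (Set ℕ) :=
  {S | ∃ F : Finset (Set ℕ), ↑F ⊆ A \ {X} ∧ S = X \ ⋃ Y ∈ F, Y}

/-- The complemented filter `𝓕(A, X)` generated by the sets `X \ ⋃ 𝓑`,
`𝓑` a finite subset of `A \ {X}`. -/
def complFilter (A : Set (Set ℕ)) (X : Set ℕ) : Filter ℕ :=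
  Filter.generate (genSets A X)

/-- The ideal `𝓙(A)` generated by the pairwise intersections of distinct members
of `A` together with the finite sets. -/
def idealJ (A : Set (Set ℕ)) : Set (Set ℕ) :=
  {X | ∃ F : Finset (Set ℕ × Set ℕ),
    (∀ p ∈ F, p.1 ∈ A ∧ p.2 ∈ A ∧ p.1 ≠ p.2) ∧
    (X \ ⋃ p ∈ F, p.1 ∩ p.2).Finite}

/-- A filter on ω is an ultrafilter. -/
def IsUltra (F : Filter ℕ) : Prop := F.NeBot ∧ ∀ S : Set ℕ, S ∈ F ∨ Sᶜ ∈ F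

/-!
If `𝓕(A, B)` is not an ultrafilter, then either `B` has a point lying in no other member of `A`,
or some `S` splits `B` into two pieces that are both positive for `𝓕(A, B)`. If infinitely many
members have private points, an infinite set of such points can be added to `A`. If infinitely
many `B_n` split, removing the earlier `B_m` leaves disjoint positive pieces `Y_n ⊆ B_n`; along an
almost disjoint family of `𝔠` many `D ⊆ ℕ`, each union `⋃_{n ∈ D} Y_n` would extend `A` unless
some member of `A` outside the `B_n` is almost covered by it modulo finitely many others, and such
a member does this for at most one `D`. Hence `𝔠 ≤ |A|`.
-/

open Set Filter

/-- `T` lies outside the ideal generated by `𝓒` and the finite sets. -/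
def IsPositive (𝓒 : Set (Set ℕ)) (T : Set ℕ) : Prop :=
  ∀ F : Finset (Set ℕ), ↑F ⊆ 𝓒 → (T \ ⋃ Y ∈ F, Y).Infinite

section Positivity

variable {𝓒 : Set (Set ℕ)} {T : Set ℕ}

theorem not_isPositive_iff :
    ¬IsPositive 𝓒 T ↔ ∃ F : Finset (Set ℕ), ↑F ⊆ 𝓒 ∧ (T \ ⋃ Y ∈ F, Y).Finite := by
  simp [IsPositive]

namespace IsPositive

theorem infinite (h : IsPositive 𝓒 T) : T.Infinite := by
  simpa using h ∅ (by simp)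

theorem mono {T' : Set ℕ} (h : IsPositive 𝓒 T) (hT : T ⊆ T') : IsPositive 𝓒 T' :=
  fun F hF => (h F hF).mono (sdiff_subset_sdiff_left hT)

theorem sdiff_finite {s : Set ℕ} (h : IsPositive 𝓒 T) (hs : s.Finite) : IsPositive 𝓒 (T \ s) :=
  fun F hF => by simpa only [sdiff_right_comm] using (h F hF).sdiff hs

theorem sdiff_biUnion {ι : Type*} (h : IsPositive 𝓒 T) (s : Finset ι) {f : ι → Set ℕ}
    (hf : ∀ i ∈ s, f i ∈ 𝓒) : IsPositive 𝓒 (T \ ⋃ i ∈ s, f i) := by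
  classical
  intro F hF
  have hsub : ↑(F ∪ s.image f) ⊆ 𝓒 := by
    simpa using ⟨hF, hf⟩
  refine (h _ hsub).mono ?_
  simp only [Finset.set_biUnion_union, Finset.set_biUnion_finset_image, sdiff_sdiff, union_comm]
  rfl

theorem union {s t : Set ℕ} (h : IsPositive 𝓒 (s ∪ t)) : IsPositive 𝓒 s ∨ IsPositive 𝓒 t := by
  classical
  by_contra! hst
  obtain ⟨⟨Fs, hFs, hs⟩, ⟨Ft, hFt, ht⟩⟩ := And.imp not_isPositive_iff.mp not_isPositive_iff.mp hst
  refine h (Fs ∪ Ft) (by simpa using union_subset hFs hFt) ((hs.union ht).subset ?_)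
  rw [Finset.set_biUnion_union, union_sdiff_distrib]
  exact union_subset_union (sdiff_subset_sdiff_right subset_union_left)
    (sdiff_subset_sdiff_right subset_union_right)

end IsPositive

theorem not_isPositive_of_subset_biUnion {ι : Type*} (s : Finset ι) {f : ι → Set ℕ}
    (hf : ∀ i ∈ s, f i ∈ 𝓒) (hT : T ⊆ ⋃ i ∈ s, f i) : ¬IsPositive 𝓒 T := fun h =>
  ((h.sdiff_biUnion s hf).infinite) (by simp [sdiff_eq_empty.mpr hT])

theorem exists_cover_of_not_isPositive (hT : T ⊆ ⋃₀ 𝓒) (h : ¬IsPositive 𝓒 T) :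
    ∃ G : Finset (Set ℕ), ↑G ⊆ 𝓒 ∧ T ⊆ ⋃ Y ∈ G, Y := by
  classical
  obtain ⟨F, hF, hfin⟩ := not_isPositive_iff.mp h
  obtain ⟨I, hI, hcover⟩ := finite_subset_iUnion hfin
    ((sdiff_subset.trans hT).trans_eq sUnion_eq_iUnion)
  refine ⟨F ∪ (hI.image Subtype.val).toFinset, ?_, fun a ha => ?_⟩
  · simpa [Set.union_subset_iff] using hF
  · rw [Finset.set_biUnion_union]
    by_cases haF : a ∈ ⋃ Y ∈ F, Y
    · exact Or.inl haF
    · obtain ⟨C, hCI, haC⟩ := mem_iUnion₂.mp (hcover ⟨ha, haF⟩)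
      exact Or.inr (mem_iUnion₂.mpr ⟨C.1, by simpa using hCI, haC⟩)

end Positivity

theorem IdealIndependent.isPositive {A : Set (Set ℕ)} {X : Set ℕ} (hA : IdealIndependent A)
    (hX : X ∈ A) : IsPositive (A \ {X}) X :=
  hA.2 X hX

theorem IdealIndependent.insert {A : Set (Set ℕ)} {B : Set ℕ} (hA : IdealIndependent A)
    (hB : IsPositive A B) (hC : ∀ C ∈ A, IsPositive (A \ {C}) (C \ B)) :
    IdealIndependent (insert B A) := by
  classical
  refine ⟨fun X hX => ?_, fun X hX F hF => ?_⟩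
  · rcases hX with rfl | hX
    exacts [hB.infinite, hA.1 X hX]
  rcases eq_or_ne X B with rfl | hXB
  · exact hB F (hF.trans (by simp))
  · have hXA : X ∈ A := hX.resolve_left hXB
    have hF' : ↑(F.erase B) ⊆ A \ {X} := by
      intro Y hY
      obtain ⟨hYB, hYF⟩ := Finset.mem_erase.mp hY
      obtain ⟨hY, hYX⟩ := hF hYF
      exact ⟨hY.resolve_left hYB, hYX⟩
    refine (hC X hXA _ hF').mono ?_
    rintro a ⟨⟨haX, haB⟩, haF⟩
    refine ⟨haX, fun ha => haF ?_⟩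
    obtain ⟨Y, hYF, haY⟩ := mem_iUnion₂.mp ha
    exact mem_iUnion₂.mpr ⟨Y, Finset.mem_erase.mpr ⟨by rintro rfl; exact haB haY, hYF⟩, haY⟩

theorem MaximalIdealIndependent.mem_of_isPositive {A : Set (Set ℕ)} {B : Set ℕ}
    (hA : MaximalIdealIndependent A) (hB : IsPositive A B)
    (hC : ∀ C ∈ A, IsPositive (A \ {C}) (C \ B)) : B ∈ A :=
  hA.2 _ (hA.1.insert hB hC) (subset_insert B A) ▸ mem_insert B A

theorem hasBasis_complFilter (A : Set (Set ℕ)) (X : Set ℕ) :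
    (complFilter A X).HasBasis (fun F : Finset (Set ℕ) => ↑F ⊆ A \ {X})
      (fun F => X \ ⋃ Y ∈ F, Y) := by
  classical
  have hbasis : IsBasis (fun F : Finset (Set ℕ) => ↑F ⊆ A \ {X}) (fun F => X \ ⋃ Y ∈ F, Y) :=
    { nonempty := ⟨∅, by simp⟩
      inter := fun {F G} hF hG => ⟨F ∪ G, by simpa using union_subset hF hG, by
        rw [Finset.set_biUnion_union, ← sdiff_inter_sdiff]⟩ }
  convert hbasis.hasBasis
  refine le_antisymm ((hbasis.hasBasis.ge_iff).mpr fun F hF => GenerateSets.basic ⟨F, hF, rfl⟩) ?_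
  exact le_generate_iff.mpr fun S ⟨F, hF, hS⟩ => hS ▸ hbasis.hasBasis.mem_of_superset hF le_rfl

theorem complFilter_neBot {A : Set (Set ℕ)} {X : Set ℕ} (hX : IsPositive (A \ {X}) X) :
    (complFilter A X).NeBot :=
  (hasBasis_complFilter A X).neBot_iff.mpr fun hF => (hX _ hF).nonempty

theorem isPositive_inter_of_compl_notMem {A : Set (Set ℕ)} {X S : Set ℕ}
    (hX : X ⊆ ⋃₀ (A \ {X})) (hS : Sᶜ ∉ complFilter A X) : IsPositive (A \ {X}) (X ∩ S) := by
  by_contra h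
  obtain ⟨G, hG, hcover⟩ := exists_cover_of_not_isPositive (inter_subset_left.trans hX) h
  exact hS ((hasBasis_complFilter A X).mem_of_superset hG
    fun a ha haS => ha.2 (hcover ⟨ha.1, haS⟩))

section PrivatePoints

variable {A : Set (Set ℕ)} {As : ℕ → Set ℕ} {p : ℕ → ℕ}

theorem isPositive_range_of_private (hAs : Function.Injective As) (hAsA : ∀ n, As n ∈ A)
    (hpA : ∀ n, p n ∈ As n) (hpriv : ∀ n, ∀ C ∈ A, p n ∈ C → C = As n) :
    IsPositive A (range p) := by
  intro F hF
  have hp : Function.Injective p := fun n m hnm =>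
    hAs (hpriv m (As n) (hAsA n) (hnm ▸ hpA n))
  have hcovered : {n | p n ∈ ⋃ Y ∈ F, Y}.Finite := by
    refine (F.finite_toSet.preimage hAs.injOn).subset fun n hn => ?_
    obtain ⟨C, hCF, hpC⟩ := mem_iUnion₂.mp hn
    exact (hpriv n C (hF hCF) hpC ▸ hCF :)
  refine (hcovered.infinite_compl.image hp.injOn).mono ?_
  rintro _ ⟨n, hn, rfl⟩
  exact ⟨mem_range_self n, hn⟩

theorem isPositive_sdiff_range_of_private (hA : IdealIndependent A)
    (hAs : Function.Injective As) (hpriv : ∀ n, ∀ C ∈ A, p n ∈ C → C = As n) :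
    ∀ C ∈ A, IsPositive (A \ {C}) (C \ range p) := by
  intro C hC
  have hmeet : (C ∩ range p).Subsingleton := by
    rintro _ ⟨hn, n, rfl⟩ _ ⟨hm, m, rfl⟩
    rw [hAs ((hpriv n C hC hn).symm.trans (hpriv m C hC hm))]
  simpa only [sdiff_self_inter] using (hA.isPositive hC).sdiff_finite hmeet.finite

theorem MaximalIdealIndependent.finite_setOf_not_subset_sUnion (hA : MaximalIdealIndependent A) :
    {B | B ∈ A ∧ ¬B ⊆ ⋃₀ (A \ {B})}.Finite := by
  by_contra h
  let e := Set.Infinite.natEmbedding _ h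
  set As : ℕ → Set ℕ := fun n => (e n : Set ℕ)
  have hAs : Function.Injective As := fun n m hnm => e.injective (Subtype.ext hnm)
  have hAsA : ∀ n, As n ∈ A := fun n => (e n).2.1
  obtain ⟨p, hpA, hpout⟩ : ∃ p : ℕ → ℕ, (∀ n, p n ∈ As n) ∧ ∀ n, p n ∉ ⋃₀ (A \ {As n}) := by
    choose p hp using fun n => not_subset.mp (e n).2.2
    exact ⟨p, fun n => (hp n).1, fun n => (hp n).2⟩
  have hpriv : ∀ n, ∀ C ∈ A, p n ∈ C → C = As n := fun n C hC hpC => by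
    by_contra hne
    exact hpout n ⟨C, ⟨hC, hne⟩, hpC⟩
  have hmem : range p ∈ A := hA.mem_of_isPositive (isPositive_range_of_private hAs hAsA hpA hpriv)
    (isPositive_sdiff_range_of_private hA.1 hAs hpriv)
  exact zero_ne_one (hAs ((hpriv 0 _ hmem ⟨0, rfl⟩).symm.trans (hpriv 1 _ hmem ⟨1, rfl⟩)))

end PrivatePoints

theorem exists_almostDisjoint_family :
    ∃ D : (ℕ → Bool) → Set ℕ, (∀ x, (D x).Infinite) ∧ Pairwise fun x y => (D x ∩ D y).Finite := by
  let code : (ℕ → Bool) → ℕ → ℕ := fun x n => Encodable.encode (List.ofFn fun i : Fin n => x i)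
  have hcode : ∀ {x y n m}, code x n = code y m → n = m ∧ ∀ i < n, x i = y i := by
    intro x y n m h
    have hlist := Encodable.encode_injective h
    obtain rfl : n = m := by simpa using congrArg List.length hlist
    exact ⟨rfl, fun i hi => by simpa [List.getElem?_ofFn, hi] using congrArg (·[i]?) hlist⟩
  refine ⟨fun x => range (code x),
    fun x => infinite_range_of_injective fun n m h => (hcode h).1, fun x y hxy => ?_⟩
  obtain ⟨k, hk⟩ := Function.ne_iff.mp hxy
  refine ((finite_Iic k).image (code x)).subset ?_
  rintro _ ⟨⟨n, rfl⟩, m, hm⟩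
  obtain ⟨rfl, hagree⟩ := hcode hm.symm
  exact mem_image_of_mem _ (not_lt.mp fun hkn => hk (hagree k hkn))

section Pieces

variable {A : Set (Set ℕ)} {As Y : ℕ → Set ℕ}

theorem eq_of_mem_of_mem_pieces (hY : ∀ n, Y n ⊆ As n)
    (hYlt : ∀ m n, m < n → Disjoint (Y n) (As m)) {a n m : ℕ} (hn : a ∈ Y n) (hm : a ∈ Y m) :
    n = m := by
  by_contra hne
  rcases lt_or_gt_of_ne hne with h | h
  · exact disjoint_left.mp (hYlt n m h) hm (hY n hn)
  · exact disjoint_left.mp (hYlt m n h) hn (hY m hm)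

theorem biUnion_pieces_inter_subset (hY : ∀ n, Y n ⊆ As n)
    (hYlt : ∀ m n, m < n → Disjoint (Y n) (As m)) (I J : Set ℕ) :
    (⋃ n ∈ I, Y n) ∩ (⋃ n ∈ J, Y n) ⊆ ⋃ n ∈ I ∩ J, As n := by
  rintro a ⟨haI, haJ⟩
  obtain ⟨n, hnI, han⟩ := mem_iUnion₂.mp haI
  obtain ⟨m, hmJ, ham⟩ := mem_iUnion₂.mp haJ
  obtain rfl := eq_of_mem_of_mem_pieces hY hYlt han ham
  exact mem_iUnion₂.mpr ⟨n, ⟨hnI, hmJ⟩, hY n han⟩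

theorem isPositive_biUnion_pieces (hAs : Function.Injective As)
    (hpos : ∀ n, IsPositive (A \ {As n}) (Y n)) {I : Set ℕ} (hI : I.Infinite) :
    IsPositive A (⋃ n ∈ I, Y n) := by
  intro F hF
  obtain ⟨n, hnI, hnF⟩ := (hI.sdiff (F.finite_toSet.preimage hAs.injOn)).nonempty
  refine (hpos n F fun C hC => ⟨hF hC, ?_⟩).mono
    (sdiff_subset_sdiff_left (subset_biUnion_of_mem hnI))
  rintro rfl
  exact hnF hC

theorem MaximalIdealIndependent.exists_not_isPositive_ssdiff_biUnion_pieces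
    (hA : MaximalIdealIndependent A) (hAs : Function.Injective As)
    (hpos : ∀ n, IsPositive (A \ {As n}) (Y n))
    (hrest : ∀ m, IsPositive (A \ {As m}) (As m \ ⋃ n, Y n)) {I : Set ℕ} (hI : I.Infinite) :
    ∃ C ∈ A, C ∉ range As ∧ ¬IsPositive (A \ {C}) (C \ ⋃ n ∈ I, Y n) := by
  by_contra! h
  have hC : ∀ C ∈ A, IsPositive (A \ {C}) (C \ ⋃ n ∈ I, Y n) := by
    intro C hC
    by_cases hCAs : C ∈ range As
    · obtain ⟨m, rfl⟩ := hCAs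
      exact (hrest m).mono (sdiff_subset_sdiff_right (iUnion₂_subset_iUnion _ _))
    · exact h C hC hCAs
  have hB := hA.mem_of_isPositive (isPositive_biUnion_pieces hAs hpos hI) hC
  exact (hC _ hB).infinite (by simp)

theorem IdealIndependent.not_isPositive_ssdiff_biUnion_pieces (hA : IdealIndependent A)
    (hAsA : ∀ n, As n ∈ A) (hY : ∀ n, Y n ⊆ As n) (hYlt : ∀ m n, m < n → Disjoint (Y n) (As m))
    {C : Set ℕ} (hC : C ∈ A) (hCAs : C ∉ range As) {I J : Set ℕ} (hIJ : (I ∩ J).Finite)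
    (hI : ¬IsPositive (A \ {C}) (C \ ⋃ n ∈ I, Y n)) :
    IsPositive (A \ {C}) (C \ ⋃ n ∈ J, Y n) := by
  have hcover : C ⊆ ((C \ ⋃ n ∈ I, Y n) ∪ (C \ ⋃ n ∈ J, Y n)) ∪ ⋃ n ∈ hIJ.toFinset, As n := by
    intro a ha
    by_cases haI : a ∈ ⋃ n ∈ I, Y n
    · by_cases haJ : a ∈ ⋃ n ∈ J, Y n
      · exact Or.inr (by simpa using biUnion_pieces_inter_subset hY hYlt I J ⟨haI, haJ⟩)
      · exact Or.inl (Or.inr ⟨ha, haJ⟩)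
    · exact Or.inl (Or.inl ⟨ha, haI⟩)
  rcases ((hA.isPositive hC).mono hcover).union with h | h
  · exact h.union.resolve_left hI
  · exact absurd h (not_isPositive_of_subset_biUnion _
      (fun n _ => ⟨hAsA n, fun hn => hCAs ⟨n, hn⟩⟩) subset_rfl)

theorem MaximalIdealIndependent.continuum_le_mk (hA : MaximalIdealIndependent A)
    (hAs : Function.Injective As) (hAsA : ∀ n, As n ∈ A) (hY : ∀ n, Y n ⊆ As n)
    (hYlt : ∀ m n, m < n → Disjoint (Y n) (As m)) (hpos : ∀ n, IsPositive (A \ {As n}) (Y n))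
    (hrest : ∀ m, IsPositive (A \ {As m}) (As m \ ⋃ n, Y n)) :
    Cardinal.continuum ≤ Cardinal.mk A := by
  obtain ⟨D, hDinf, hDad⟩ := exists_almostDisjoint_family
  choose C hCA hCAs hkill using fun x =>
    hA.exists_not_isPositive_ssdiff_biUnion_pieces hAs hpos hrest (hDinf x)
  have hinj : Function.Injective fun x => (⟨C x, hCA x⟩ : A) := by
    intro x y hxy
    by_contra hne
    have hCxy : C x = C y := congrArg Subtype.val hxy
    refine hkill y ?_
    rw [← hCxy]
    exact hA.1.not_isPositive_ssdiff_biUnion_pieces hAsA hY hYlt (hCA x) (hCAs x) (hDad hne)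
      (hkill x)
  calc Cardinal.continuum = Cardinal.mk (ℕ → Bool) := by simp
    _ ≤ Cardinal.mk A := Cardinal.mk_le_of_injective hinj

end Pieces

theorem MaximalIdealIndependent.finite_setOf_split {A : Set (Set ℕ)}
    (hA : MaximalIdealIndependent A) (hcard : Cardinal.mk A < Cardinal.continuum) :
    {B | B ∈ A ∧ ∃ S, IsPositive (A \ {B}) (B ∩ S) ∧ IsPositive (A \ {B}) (B \ S)}.Finite := by
  by_contra h
  let e := Set.Infinite.natEmbedding _ h
  set As : ℕ → Set ℕ := fun n => (e n : Set ℕ)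
  have hAs : Function.Injective As := fun n m hnm => e.injective (Subtype.ext hnm)
  have hAsA : ∀ n, As n ∈ A := fun n => (e n).2.1
  choose S hS hSc using fun n => (e n).2.2
  have hprev : ∀ n, ∀ m ∈ Finset.range n, As m ∈ A \ {As n} := fun n m hm =>
    ⟨hAsA m, hAs.ne (Finset.mem_range.mp hm).ne⟩
  set Y : ℕ → Set ℕ := fun n => (As n ∩ S n) \ ⋃ m ∈ Finset.range n, As m
  have hYlt : ∀ m n, m < n → Disjoint (Y n) (As m) := fun m n hmn =>
    disjoint_left.mpr fun a ha ham => ha.2 (mem_iUnion₂.mpr ⟨m, Finset.mem_range.mpr hmn, ham⟩)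
  have hrest : ∀ m, IsPositive (A \ {As m}) (As m \ ⋃ n, Y n) := by
    refine fun m => ((hSc m).sdiff_biUnion _ (hprev m)).mono ?_
    rintro a ⟨⟨ham, haS⟩, haprev⟩
    refine ⟨ham, fun ha => ?_⟩
    obtain ⟨n, han⟩ := mem_iUnion.mp ha
    rcases lt_trichotomy n m with hnm | rfl | hnm
    · exact haprev (mem_iUnion₂.mpr ⟨n, Finset.mem_range.mpr hnm, han.1.1⟩)
    · exact haS han.1.2
    · exact disjoint_left.mp (hYlt m n hnm) han ham
  refine (hA.continuum_le_mk hAs hAsA (fun n => sdiff_subset.trans inter_subset_left) hYlt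
    (fun n => (hS n).sdiff_biUnion _ (hprev n)) hrest).not_gt hcard

theorem IdealIndependent.setOf_not_isUltra_subset {A : Set (Set ℕ)} (hA : IdealIndependent A) :
    {B | B ∈ A ∧ ¬IsUltra (complFilter A B)} ⊆
      {B | B ∈ A ∧ ¬B ⊆ ⋃₀ (A \ {B})} ∪
      {B | B ∈ A ∧ ∃ S, IsPositive (A \ {B}) (B ∩ S) ∧ IsPositive (A \ {B}) (B \ S)} := by
  rintro B ⟨hB, hnu⟩
  by_cases hcov : B ⊆ ⋃₀ (A \ {B})
  · obtain ⟨S, hS, hSc⟩ : ∃ S, S ∉ complFilter A B ∧ Sᶜ ∉ complFilter A B := by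
      by_contra! h
      exact hnu ⟨complFilter_neBot (hA.isPositive hB), fun S => or_iff_not_imp_left.mpr (h S)⟩
    refine Or.inr ⟨hB, S, isPositive_inter_of_compl_notMem hcov hSc, ?_⟩
    simpa only [sdiff_eq] using isPositive_inter_of_compl_notMem hcov (by rwa [compl_compl])
  · exact Or.inl ⟨hB, hcov⟩

/-- A maximal ideal independent family of size < 𝔠 has at most finitely many members
whose complemented filter is not an ultrafilter. -/
theorem stmt12 (A : Set (Set ℕ)) (hA : MaximalIdealIndependent A)
    (hcard : Cardinal.mk ↥A < Cardinal.continuum) :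
    {B | B ∈ A ∧ ¬ IsUltra (complFilter A B)}.Finite :=
  (hA.finite_setOf_not_subset_sUnion.union (hA.finite_setOf_split hcard)).subset
    hA.1.setOf_not_isUltra_subset
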